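/- Corollary 4 (substructural generation of vorticity in complex fluids): For a steady flow of a complex fluid with order-parameter values in ℝᵏ satisfying both the steady momentum balance ρ (Dv)v = div T with T = −p̃ I − T̄^E and the steady substructural balance div S − z = v·grad(∂_ν̇χ) − ∂_νχ, if the entropy η and the total enthalpy h_c are constant throughout B, then at every point of B and for every index i: (ω × v)_i = −Σ_α ∂_i( ι ( Σ_j ∂_j S_α^j − v·grad((∂_ν̇χ)_α) + (∂_νχ)_α ) ) ν^α − Σ_{α,j} ∂_i((∂_Nφ)_α^j) ∂_jν^α − ι Σ_α ∂_iν^α ( Σ_j ∂_j((∂_Nφ)_α^j) ) − ι Σ_{α,j} (∂_Nφ)_α^j ∂_j∂_iν^α. -/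

import Mathlib

noncomputable section

/-- Points of ℝ³. -/
abbrev V3 : Type := Fin 3 → ℝ

/-- Partial derivative ∂ᵢ of a scalar field on ℝ³. -/
def pd (i : Fin 3) (f : V3 → ℝ) (x : V3) : ℝ :=
  fderiv ℝ f x (Pi.single i 1)

/-- Cross product on ℝ³. -/
def cross (a b : V3) : V3 :=
  ![a 1 * b 2 - a 2 * b 1,
    a 2 * b 0 - a 0 * b 2,
    a 0 * b 1 - a 1 * b 0]

/-- Curl of a vector field on ℝ³. -/
def curl (u : V3 → V3) (x : V3) : V3 :=
  ![pd 1 (fun y => u y 2) x - pd 2 (fun y => u y 1) x,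
    pd 2 (fun y => u y 0) x - pd 0 (fun y => u y 2) x,
    pd 0 (fun y => u y 1) x - pd 1 (fun y => u y 0) x]

/-- A steady complex fluid on an open set `B ⊆ ℝ³` with order-parameter values
in `ℝᵏ`: smooth fields `ρ > 0` (mass density), `η` (entropy), `v` (velocity),
`ν` (order parameter), a smooth potential `φ = φ(ι, n, N, η)` and a smooth
kinetic co-energy `χ = χ(n, ṅ)`. -/
structure ComplexFluid (k : ℕ) where
  B : Set V3
  hB : IsOpen B
  ρ : V3 → ℝ
  η : V3 → ℝ
  v : V3 → V3
  ν : V3 → Fin k → ℝ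
  φ : ℝ × (Fin k → ℝ) × (Fin k → Fin 3 → ℝ) × ℝ → ℝ
  χ : (Fin k → ℝ) × (Fin k → ℝ) → ℝ
  hρ : ContDiffOn ℝ (⊤ : ℕ∞) ρ B
  hη : ContDiffOn ℝ (⊤ : ℕ∞) η B
  hv : ContDiffOn ℝ (⊤ : ℕ∞) v B
  hν : ContDiffOn ℝ (⊤ : ℕ∞) ν B
  hφ : ContDiff ℝ (⊤ : ℕ∞) φ
  hχ : ContDiff ℝ (⊤ : ℕ∞) χ
  hρpos : ∀ x ∈ B, 0 < ρ x

namespace ComplexFluid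

variable {k : ℕ} (K : ComplexFluid k)

/-- Specific volume `ι = 1/ρ`. -/
def ι (x : V3) : ℝ := (K.ρ x)⁻¹

/-- Gradient of the order parameter, components `(Dν)_α^j = ∂_jν^α`. -/
def Dν (x : V3) (α : Fin k) (j : Fin 3) : ℝ := pd j (fun y => K.ν y α) x

/-- The point `(ι(x), ν(x), Dν(x), η(x))` at which `φ` and its partial
derivatives are evaluated. -/
def pt (x : V3) : ℝ × (Fin k → ℝ) × (Fin k → Fin 3 → ℝ) × ℝ :=
  (K.ι x, K.ν x, K.Dν x, K.η x)

/-- `∂_ιφ` evaluated along the fields. -/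
def dφι (x : V3) : ℝ := fderiv ℝ K.φ (K.pt x) (1, 0, 0, 0)

/-- `(∂_νφ)_α` evaluated along the fields. -/
def dφν (x : V3) (α : Fin k) : ℝ := fderiv ℝ K.φ (K.pt x) (0, Pi.single α 1, 0, 0)

/-- `(∂_Nφ)_α^j` evaluated along the fields. -/
def dφN (x : V3) (α : Fin k) (j : Fin 3) : ℝ :=
  fderiv ℝ K.φ (K.pt x) (0, 0, Pi.single α (Pi.single j 1), 0)

/-- Temperature `ϑ = ∂_ηφ` evaluated along the fields. -/
def temp (x : V3) : ℝ := fderiv ℝ K.φ (K.pt x) (0, 0, 0, 1)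

/-- Convective rate `ν̇ = (Dν)v`. -/
def νdot (x : V3) (α : Fin k) : ℝ := ∑ j, K.Dν x α j * K.v x j

/-- `(∂_νχ)_α` evaluated along the fields. -/
def dχν (x : V3) (α : Fin k) : ℝ :=
  fderiv ℝ K.χ (K.ν x, K.νdot x) (Pi.single α 1, 0)

/-- The field `(∂_ν̇χ)_α` evaluated along the fields. -/
def dχνdot (x : V3) (α : Fin k) : ℝ :=
  fderiv ℝ K.χ (K.ν x, K.νdot x) (0, Pi.single α 1)

/-- Pressure `p̃ = −∂_ιφ`. -/
def ptil (x : V3) : ℝ := -(K.dφι x)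

/-- Microstress `S = ρ ∂_Nφ`. -/
def S (x : V3) (α : Fin k) (j : Fin 3) : ℝ := K.ρ x * K.dφN x α j

/-- Self-interaction `z = ρ ∂_νφ`. -/
def z (x : V3) (α : Fin k) : ℝ := K.ρ x * K.dφν x α

/-- Ericksen stress `(T̄^E)_{ij} = Σ_α ∂_iν^α (∂_Nφ)_α^j`. -/
def TE (x : V3) (i j : Fin 3) : ℝ := ∑ α, K.Dν x α i * K.dφN x α j

/-- Specific enthalpy `ξ_c = φ − ι ∂_ιφ − ∂_νφ·ν − ∂_Nφ·Dν`. -/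
def ξc (x : V3) : ℝ :=
  K.φ (K.pt x) - K.ι x * K.dφι x - (∑ α, K.dφν x α * K.ν x α)
    - ∑ α, ∑ j, K.dφN x α j * K.Dν x α j

/-- Total enthalpy `h_c = (1/2)|v|² + ξ_c`. -/
def hc (x : V3) : ℝ := (1 / 2) * (∑ i, (K.v x i) ^ 2) + K.ξc x

/-- Steady momentum balance `ρ (Dv)v = div T` with `T = −p̃ I − T̄^E`
(stated componentwise). -/
def MomentumBalance : Prop :=
  ∀ x ∈ K.B, ∀ i : Fin 3,
    K.ρ x * ∑ j, pd j (fun y => K.v y i) x * K.v x j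
      = ∑ j, pd j (fun y => -(K.ptil y) * (if i = j then (1:ℝ) else 0) - K.TE y i j) x

/-- Steady substructural balance `div S − z = v·grad(∂_ν̇χ) − ∂_νχ`
(stated componentwise on the order-parameter index). -/
def SubstructuralBalance : Prop :=
  ∀ x ∈ K.B, ∀ α : Fin k,
    (∑ j, pd j (fun y => K.S y α j) x) - K.z x α
      = (∑ j, K.v x j * pd j (fun y => K.dχνdot y α) x) - K.dχν x α

end ComplexFluid

/-!
Since `(ω × v)_i = Σ_j ∂_j v_i v_j − ∂_i(|v|²/2)`, the vorticity term is the convective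
acceleration minus the gradient of the kinetic energy. The momentum balance expresses the former
as `ι (∂_i ∂_ιφ − (div T̄^E)_i)`; constancy of `h_c` turns the latter into `−∂_i ξ_c`. By the chain
rule through `φ(ι, ν, Dν, η)`, the first-order terms of `∂_i ξ_c` cancel and
`∂_i ξ_c = −ι ∂_i ∂_ιφ − ∂_i(∂_νφ)·ν − ∂_i(∂_Nφ)·Dν + ϑ ∂_i η`, where `∂_i η = 0`. The `∂_ιφ`
terms cancel, and the substructural balance identifies `∂_νφ = ι z` with
`ι (div S − v·grad ∂_ν̇χ + ∂_νχ)`.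
-/

open Topology

section PartialDerivative

variable {f g : V3 → ℝ} {x : V3} {i : Fin 3}

lemma pd_congr (h : f =ᶠ[𝓝 x] g) : pd i f x = pd i g x := by
  rw [pd, h.fderiv_eq, pd]

lemma pd_eq_zero_of_const_on_open {B : Set V3} (hB : IsOpen B) (hx : x ∈ B)
    (hf : ∀ y ∈ B, ∀ z ∈ B, f y = f z) : pd i f x = 0 := by
  rw [pd_congr (g := fun _ => f x)
    (Filter.eventually_of_mem (hB.mem_nhds hx) fun y hy => hf y hy x hx)]
  simp [pd]

lemma pd_add (hf : DifferentiableAt ℝ f x) (hg : DifferentiableAt ℝ g x) :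
    pd i (fun y => f y + g y) x = pd i f x + pd i g x := by
  simp [pd, fderiv_fun_add hf hg]

lemma pd_sub (hf : DifferentiableAt ℝ f x) (hg : DifferentiableAt ℝ g x) :
    pd i (fun y => f y - g y) x = pd i f x - pd i g x := by
  simp [pd, fderiv_fun_sub hf hg]

lemma pd_mul (hf : DifferentiableAt ℝ f x) (hg : DifferentiableAt ℝ g x) :
    pd i (fun y => f y * g y) x = pd i f x * g x + f x * pd i g x := by
  simp [pd, fderiv_fun_mul hf hg, add_comm, mul_comm]

lemma pd_mul_const (hf : DifferentiableAt ℝ f x) (c : ℝ) :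
    pd i (fun y => f y * c) x = pd i f x * c := by
  rw [pd, fderiv_mul_const hf c]
  simp [pd, mul_comm]

lemma pd_const_mul (hf : DifferentiableAt ℝ f x) (c : ℝ) :
    pd i (fun y => c * f y) x = c * pd i f x := by
  simp [pd, fderiv_const_mul hf c]

lemma pd_sum {ι : Type*} {s : Finset ι} {F : ι → V3 → ℝ}
    (hF : ∀ a ∈ s, DifferentiableAt ℝ (F a) x) :
    pd i (fun y => ∑ a ∈ s, F a y) x = ∑ a ∈ s, pd i (F a) x := by
  simp [pd, fderiv_fun_sum hF]

lemma pd_sum_mul {ι : Type*} {s : Finset ι} {F G : ι → V3 → ℝ}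
    (hF : ∀ a ∈ s, DifferentiableAt ℝ (F a) x) (hG : ∀ a ∈ s, DifferentiableAt ℝ (G a) x) :
    pd i (fun y => ∑ a ∈ s, F a y * G a y) x
      = ∑ a ∈ s, (pd i (F a) x * G a x + F a x * pd i (G a) x) := by
  rw [pd_sum (F := fun a y => F a y * G a y) fun a ha => (hF a ha).mul (hG a ha)]
  exact Finset.sum_congr rfl fun a ha => pd_mul (hF a ha) (hG a ha)

lemma pd_half_sum_sq {m : ℕ} {u : V3 → Fin m → ℝ}
    (hu : ∀ j, DifferentiableAt ℝ (fun y => u y j) x) :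
    pd i (fun y => 1 / 2 * ∑ j, u y j ^ 2) x = ∑ j, u x j * pd i (fun y => u y j) x := by
  simp_rw [sq]
  rw [pd_const_mul (f := fun y => ∑ j, u y j * u y j) (.fun_sum fun j _ => (hu j).mul (hu j)),
    pd_sum_mul (fun j _ => hu j) (fun j _ => hu j), Finset.mul_sum]
  exact Finset.sum_congr rfl fun j _ => by ring

end PartialDerivative

lemma ContinuousLinearMap.apply_prod_pi_eq_sum {ι κ : Type*} [Fintype ι] [Fintype κ]
    [DecidableEq ι] [DecidableEq κ] (L : (ℝ × (ι → ℝ) × (ι → κ → ℝ) × ℝ) →L[ℝ] ℝ)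
    (a : ℝ) (b : ι → ℝ) (c : ι → κ → ℝ) (d : ℝ) :
    L (a, b, c, d) = a * L (1, 0, 0, 0) + ∑ α, b α * L (0, Pi.single α 1, 0, 0)
      + ∑ α, ∑ j, c α j * L (0, 0, Pi.single α (Pi.single j 1), 0) + d * L (0, 0, 0, 1) := by
  have hbasis : (a, b, c, d) = a • ((1 : ℝ), (0 : ι → ℝ), (0 : ι → κ → ℝ), (0 : ℝ))
      + ∑ α, b α • ((0 : ℝ), (Pi.single α 1 : ι → ℝ), (0 : ι → κ → ℝ), (0 : ℝ))
      + ∑ α, ∑ j, c α j • ((0 : ℝ), (0 : ι → ℝ),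
          (Pi.single α (Pi.single j 1) : ι → κ → ℝ), (0 : ℝ))
      + d • ((0 : ℝ), (0 : ι → ℝ), (0 : ι → κ → ℝ), (1 : ℝ)) := by
    ext <;> simp [Prod.fst_sum, Prod.snd_sum, Finset.sum_apply, Pi.single_apply]
  rw [hbasis]
  simp only [map_add, map_sum, map_smul, smul_eq_mul]

lemma cross_curl_self_apply (u : V3 → V3) (x : V3) (i : Fin 3) :
    cross (curl u x) (u x) i
      = ∑ j, pd j (fun y => u y i) x * u x j - ∑ j, u x j * pd i (fun y => u y j) x := by
  fin_cases i <;> simp [cross, curl, Fin.sum_univ_three] <;> ring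

namespace ComplexFluid

variable {k : ℕ} (K : ComplexFluid k) {x : V3}

lemma contDiffAt_ι (hx : x ∈ K.B) : ContDiffAt ℝ (⊤ : ℕ∞) K.ι x :=
  (K.hρ.contDiffAt (K.hB.mem_nhds hx)).inv (K.hρpos x hx).ne'

lemma contDiffAt_η (hx : x ∈ K.B) : ContDiffAt ℝ (⊤ : ℕ∞) K.η x :=
  K.hη.contDiffAt (K.hB.mem_nhds hx)

lemma contDiffAt_ν (hx : x ∈ K.B) : ContDiffAt ℝ (⊤ : ℕ∞) K.ν x :=
  K.hν.contDiffAt (K.hB.mem_nhds hx)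

lemma contDiffAt_Dν_apply (hx : x ∈ K.B) (α : Fin k) (j : Fin 3) :
    ContDiffAt ℝ (⊤ : ℕ∞) (fun y => K.Dν y α j) x :=
  ((contDiffAt_pi.mp (K.contDiffAt_ν hx) α).fderiv_right (by simp)).clm_apply contDiffAt_const

lemma contDiffAt_pt (hx : x ∈ K.B) : ContDiffAt ℝ (⊤ : ℕ∞) K.pt x :=
  (K.contDiffAt_ι hx).prodMk ((K.contDiffAt_ν hx).prodMk
    ((contDiffAt_pi.mpr fun α => contDiffAt_pi.mpr fun j => K.contDiffAt_Dν_apply hx α j).prodMk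
      (K.contDiffAt_η hx)))

lemma differentiableAt_v_apply (hx : x ∈ K.B) (j : Fin 3) :
    DifferentiableAt ℝ (fun y => K.v y j) x :=
  (contDiffAt_pi.mp (K.hv.contDiffAt (K.hB.mem_nhds hx)) j).differentiableAt (by simp)

lemma differentiableAt_ν_apply (hx : x ∈ K.B) (α : Fin k) :
    DifferentiableAt ℝ (fun y => K.ν y α) x :=
  (contDiffAt_pi.mp (K.contDiffAt_ν hx) α).differentiableAt (by simp)

lemma differentiableAt_Dν_apply (hx : x ∈ K.B) (α : Fin k) (j : Fin 3) :
    DifferentiableAt ℝ (fun y => K.Dν y α j) x :=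
  (K.contDiffAt_Dν_apply hx α j).differentiableAt (by simp)

lemma differentiableAt_ι (hx : x ∈ K.B) : DifferentiableAt ℝ K.ι x :=
  (K.contDiffAt_ι hx).differentiableAt (by simp)

lemma differentiableAt_pt (hx : x ∈ K.B) : DifferentiableAt ℝ K.pt x :=
  (K.contDiffAt_pt hx).differentiableAt (by simp)

lemma differentiableAt_φ_pt (hx : x ∈ K.B) : DifferentiableAt ℝ (fun y => K.φ (K.pt y)) x :=
  (K.hφ.differentiable (by simp)).differentiableAt.comp x (K.differentiableAt_pt hx)

lemma differentiableAt_fderiv_φ_pt_apply (hx : x ∈ K.B)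
    (w : ℝ × (Fin k → ℝ) × (Fin k → Fin 3 → ℝ) × ℝ) :
    DifferentiableAt ℝ (fun y => fderiv ℝ K.φ (K.pt y) w) x :=
  (((K.hφ.fderiv_right (m := ((⊤ : ℕ∞) : WithTop ℕ∞)) (by simp)).contDiffAt.comp x
    (K.contDiffAt_pt hx)).clm_apply contDiffAt_const).differentiableAt (by simp)

lemma differentiableAt_dφι (hx : x ∈ K.B) : DifferentiableAt ℝ K.dφι x :=
  K.differentiableAt_fderiv_φ_pt_apply hx _

lemma differentiableAt_dφν (hx : x ∈ K.B) (α : Fin k) :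
    DifferentiableAt ℝ (fun y => K.dφν y α) x :=
  K.differentiableAt_fderiv_φ_pt_apply hx _

lemma differentiableAt_dφN (hx : x ∈ K.B) (α : Fin k) (j : Fin 3) :
    DifferentiableAt ℝ (fun y => K.dφN y α j) x :=
  K.differentiableAt_fderiv_φ_pt_apply hx _

lemma fderiv_pt_single (hx : x ∈ K.B) (i : Fin 3) :
    fderiv ℝ K.pt x (Pi.single i 1)
      = (pd i K.ι x, fun α => K.Dν x α i,
          fun α j => pd i (fun y => K.Dν y α j) x, pd i K.η x) := by
  have hν : HasFDerivAt K.ν (.pi fun α => fderiv ℝ (fun y => K.ν y α) x) x :=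
    hasFDerivAt_pi.mpr fun α => (K.differentiableAt_ν_apply hx α).hasFDerivAt
  have hDν : HasFDerivAt K.Dν
      (.pi fun α => .pi fun j => fderiv ℝ (fun y => K.Dν y α j) x) x :=
    hasFDerivAt_pi.mpr fun α => hasFDerivAt_pi.mpr fun j =>
      (K.differentiableAt_Dν_apply hx α j).hasFDerivAt
  rw [HasFDerivAt.fderiv (f := K.pt) ((K.differentiableAt_ι hx).hasFDerivAt.prodMk
    (hν.prodMk (hDν.prodMk ((K.contDiffAt_η hx).differentiableAt (by simp)).hasFDerivAt)))]
  rfl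

lemma pd_φ_pt (hx : x ∈ K.B) (i : Fin 3) :
    pd i (fun y => K.φ (K.pt y)) x
      = K.dφι x * pd i K.ι x + ∑ α, K.dφν x α * K.Dν x α i
        + ∑ α, ∑ j, K.dφN x α j * pd i (fun y => K.Dν y α j) x
        + K.temp x * pd i K.η x := by
  rw [pd, fderiv_fun_comp x (K.hφ.differentiable (by simp)).differentiableAt
    (K.differentiableAt_pt hx), ContinuousLinearMap.comp_apply, K.fderiv_pt_single hx i,
    ContinuousLinearMap.apply_prod_pi_eq_sum]
  simp only [dφι, dφν, dφN, temp, Dν, mul_comm]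

lemma differentiableAt_TE_apply (hx : x ∈ K.B) (i j : Fin 3) :
    DifferentiableAt ℝ (fun y => K.TE y i j) x :=
  .fun_sum fun α _ => (K.differentiableAt_Dν_apply hx α i).mul (K.differentiableAt_dφN hx α j)

lemma differentiableAt_ξc (hx : x ∈ K.B) : DifferentiableAt ℝ K.ξc x :=
  (((K.differentiableAt_φ_pt hx).sub
      ((K.differentiableAt_ι hx).mul (K.differentiableAt_dφι hx))).sub
    (.fun_sum fun α _ => (K.differentiableAt_dφν hx α).mul (K.differentiableAt_ν_apply hx α))).sub
    (.fun_sum fun α _ => .fun_sum fun j _ =>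
      (K.differentiableAt_dφN hx α j).mul (K.differentiableAt_Dν_apply hx α j))

lemma pd_ξc (hx : x ∈ K.B) (i : Fin 3) :
    pd i K.ξc x
      = -(K.ι x * pd i K.dφι x) - ∑ α, pd i (fun y => K.dφν y α) x * K.ν x α
        - ∑ α, ∑ j, pd i (fun y => K.dφN y α j) x * K.Dν x α j + K.temp x * pd i K.η x := by
  have dφν := K.differentiableAt_dφν hx
  have dν := K.differentiableAt_ν_apply hx
  have dφN := K.differentiableAt_dφN hx
  have dDν := K.differentiableAt_Dν_apply hx
  have hν : pd i (fun y => ∑ α, K.dφν y α * K.ν y α) x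
      = ∑ α, (pd i (fun y => K.dφν y α) x * K.ν x α + K.dφν x α * K.Dν x α i) :=
    pd_sum_mul (fun α _ => dφν α) (fun α _ => dν α)
  have hN : pd i (fun y => ∑ α, ∑ j, K.dφN y α j * K.Dν y α j) x
      = ∑ α, ∑ j, (pd i (fun y => K.dφN y α j) x * K.Dν x α j
          + K.dφN x α j * pd i (fun y => K.Dν y α j) x) := by
    rw [pd_sum (F := fun α y => ∑ j, K.dφN y α j * K.Dν y α j)
      fun α _ => .fun_sum fun j _ => (dφN α j).mul (dDν α j)]
    exact Finset.sum_congr rfl fun α _ => pd_sum_mul (fun j _ => dφN α j) (fun j _ => dDν α j)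
  have dφ_ι := (K.differentiableAt_ι hx).fun_mul (K.differentiableAt_dφι hx)
  have dν_sum : DifferentiableAt ℝ (fun y => ∑ α, K.dφν y α * K.ν y α) x :=
    .fun_sum fun α _ => (dφν α).mul (dν α)
  have dN_sum : DifferentiableAt ℝ (fun y => ∑ α, ∑ j, K.dφN y α j * K.Dν y α j) x :=
    .fun_sum fun α _ => .fun_sum fun j _ => (dφN α j).mul (dDν α j)
  rw [show K.ξc = fun y => K.φ (K.pt y) - K.ι y * K.dφι y - ∑ α, K.dφν y α * K.ν y α
      - ∑ α, ∑ j, K.dφN y α j * K.Dν y α j from rfl,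
    pd_sub (((K.differentiableAt_φ_pt hx).fun_sub dφ_ι).fun_sub dν_sum) dN_sum,
    pd_sub ((K.differentiableAt_φ_pt hx).fun_sub dφ_ι) dν_sum,
    pd_sub (K.differentiableAt_φ_pt hx) dφ_ι,
    pd_mul (K.differentiableAt_ι hx) (K.differentiableAt_dφι hx), K.pd_φ_pt hx, hν, hN]
  simp only [Finset.sum_add_distrib]
  ring

lemma pd_TE_apply (hx : x ∈ K.B) (i j : Fin 3) :
    pd j (fun y => K.TE y i j) x
      = ∑ α, (pd j (fun y => K.Dν y α i) x * K.dφN x α j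
          + K.Dν x α i * pd j (fun y => K.dφN y α j) x) :=
  pd_sum_mul (fun α _ => K.differentiableAt_Dν_apply hx α i)
    (fun α _ => K.differentiableAt_dφN hx α j)

lemma div_stress_eq (hx : x ∈ K.B) (i : Fin 3) :
    ∑ j, pd j (fun y => -(K.ptil y) * (if i = j then (1 : ℝ) else 0) - K.TE y i j) x
      = pd i K.dφι x - ∑ α, K.Dν x α i * ∑ j, pd j (fun y => K.dφN y α j) x
        - ∑ α, ∑ j, K.dφN x α j * pd j (fun y => K.Dν y α i) x := by
  have hj : ∀ j, pd j (fun y => -(K.ptil y) * (if i = j then (1 : ℝ) else 0) - K.TE y i j) x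
      = pd j K.dφι x * (if i = j then 1 else 0) - pd j (fun y => K.TE y i j) x := fun j => by
    simp only [ptil, neg_neg]
    rw [pd_sub ((K.differentiableAt_dφι hx).mul_const _) (K.differentiableAt_TE_apply hx i j),
      pd_mul_const (K.differentiableAt_dφι hx)]
  rw [Finset.sum_congr rfl fun j _ => hj j]
  simp only [K.pd_TE_apply hx, Finset.sum_sub_distrib, mul_ite, mul_one, mul_zero,
    Finset.sum_ite_eq, Finset.mem_univ, if_true, Finset.sum_add_distrib, Finset.mul_sum]
  rw [Finset.sum_comm (f := fun j α => pd j (fun y => K.Dν y α i) x * K.dφN x α j),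
    Finset.sum_comm (f := fun j α => K.Dν x α i * pd j (fun y => K.dφN y α j) x)]
  simp only [mul_comm (pd _ (fun y => K.Dν y _ i) x)]
  ring

lemma convective_accel_eq (hbal : K.MomentumBalance) (hx : x ∈ K.B) (i : Fin 3) :
    ∑ j, pd j (fun y => K.v y i) x * K.v x j
      = K.ι x * (pd i K.dφι x - ∑ α, K.Dν x α i * ∑ j, pd j (fun y => K.dφN y α j) x
        - ∑ α, ∑ j, K.dφN x α j * pd j (fun y => K.Dν y α i) x) := by
  rw [← K.div_stress_eq hx i, ← hbal x hx i, ι, inv_mul_cancel_left₀ (K.hρpos x hx).ne']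

lemma pd_ι_mul_substructural_eq (hsub : K.SubstructuralBalance) (hx : x ∈ K.B) (i : Fin 3)
    (α : Fin k) :
    pd i (fun y => K.ι y * ((∑ j, pd j (fun w => K.S w α j) y)
        - (∑ j, K.v y j * pd j (fun w => K.dχνdot w α) y) + K.dχν y α)) x
      = pd i (fun y => K.dφν y α) x := by
  refine pd_congr ?_
  filter_upwards [K.hB.mem_nhds hx] with y hy
  rw [show (∑ j, pd j (fun w => K.S w α j) y) - (∑ j, K.v y j * pd j (fun w => K.dχνdot w α) y)
      + K.dχν y α = K.z y α by linarith [hsub y hy α],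
    z, ι, inv_mul_cancel_left₀ (K.hρpos y hy).ne']

lemma kinetic_grad_eq_neg_pd_ξc (hh : ∀ x ∈ K.B, ∀ y ∈ K.B, K.hc x = K.hc y) (hx : x ∈ K.B)
    (i : Fin 3) : ∑ j, K.v x j * pd i (fun y => K.v y j) x = -pd i K.ξc x := by
  have hconst : pd i K.hc x = 0 := pd_eq_zero_of_const_on_open K.hB hx hh
  have dv := K.differentiableAt_v_apply hx
  rw [show K.hc = fun y => 1 / 2 * ∑ j, K.v y j ^ 2 + K.ξc y from rfl,
    pd_add ((DifferentiableAt.fun_sum fun j _ => (dv j).fun_pow 2).const_mul _)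
      (K.differentiableAt_ξc hx),
    pd_half_sum_sq dv] at hconst
  linarith

end ComplexFluid

/-- Corollary 4, substructural generation of vorticity in
complex fluids: under the steady momentum and substructural balances, if the
entropy `η` and the total enthalpy `h_c` are constant throughout `B`, then at
every point of `B` and for every index `i`:
`(ω × v)_i = −Σ_α ∂_i( ι ( Σ_j ∂_j S_α^j − v·grad((∂_ν̇χ)_α) + (∂_νχ)_α ) ) ν^α`
`  − Σ_{α,j} ∂_i((∂_Nφ)_α^j) ∂_jν^α − ι Σ_α ∂_iν^α ( Σ_j ∂_j((∂_Nφ)_α^j) )`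
`  − ι Σ_{α,j} (∂_Nφ)_α^j ∂_j∂_iν^α`. -/
theorem complexFluid_substructural_generation_of_vorticity
    {k : ℕ} (K : ComplexFluid k)
    (hbal : K.MomentumBalance) (hsub : K.SubstructuralBalance)
    (hη : ∀ x ∈ K.B, ∀ y ∈ K.B, K.η x = K.η y)
    (hh : ∀ x ∈ K.B, ∀ y ∈ K.B, K.hc x = K.hc y) :
    ∀ x ∈ K.B, ∀ i : Fin 3,
      cross (curl K.v x) (K.v x) i
        = -(∑ α, pd i (fun y => K.ι y *
              ((∑ j, pd j (fun w => K.S w α j) y)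
                - (∑ j, K.v y j * pd j (fun w => K.dχνdot w α) y)
                + K.dχν y α)) x * K.ν x α)
          - (∑ α, ∑ j, pd i (fun y => K.dφN y α j) x * K.Dν x α j)
          - K.ι x * (∑ α, K.Dν x α i * (∑ j, pd j (fun y => K.dφN y α j) x))
          - K.ι x * ∑ α, ∑ j, K.dφN x α j * pd j (fun y => K.Dν y α i) x := by
  intro x hx i
  have hη0 : pd i K.η x = 0 := pd_eq_zero_of_const_on_open K.hB hx hη
  simp_rw [K.pd_ι_mul_substructural_eq hsub hx i]
  rw [cross_curl_self_apply, K.convective_accel_eq hbal hx i,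
    K.kinetic_grad_eq_neg_pd_ξc hh hx i, K.pd_ξc hx i, hη0]
  ring
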